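/- Let n ≥ 1 and let x, y : {0,1}^n → {0,2}. Consider the (n+2)-player game in which players 1,…,n each choose an action in {0,1} and players n+1 and n+2 each choose an action in {1,2}; writing a ∈ {0,1}^n for the profile of the first n players and (r,s) for the actions of players n+1 and n+2, the utilities are: u_i(a,r,s) = a_i for each i ∈ {1,…,n}; u_{n+1}(a,r,s) = 2 if (r,s)=(1,1), 1 if (r,s)=(1,2), 1 if (r,s)=(2,1), x_a if (r,s)=(2,2); and u_{n+2}(a,r,s) = 1 if (r,s)=(1,1), 2 if (r,s)=(1,2), y_a if (r,s)=(2,1), 1 if (r,s)=(2,2). Then this game has a better-reply cycle if and only if there exists a ∈ {0,1}^n with x_a = 2 and y_a = 2. -/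

import Mathlib

/-- The game with players `P`, action sets `C p`, and utilities `u` has a better-reply
cycle: a sequence of profiles `a 0, a 1, …, a K` with `K ≥ 1` and `a K = a 0`, each
obtained from the previous one by changing the action of exactly one player, whose
utility strictly increases. -/
def HasBetterReplyCycle {P : Type*} {C : P → Type*}
    (u : ∀ _ : P, (∀ q, C q) → ℝ) : Prop :=
  ∃ (K : ℕ) (a : ℕ → ∀ q, C q), 1 ≤ K ∧ a K = a 0 ∧
    ∀ t < K, ∃ p : P, a (t + 1) p ≠ a t p ∧ (∀ q, q ≠ p → a (t + 1) q = a t q) ∧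
      u p (a t) < u p (a (t + 1))

/-- Action sets: players `Sum.inl i` (for `i ∈ {1,…,n}`) choose in `{0,1}` (`Bool`);
players `Sum.inr 0` (player `n+1`) and `Sum.inr 1` (player `n+2`) choose in `{1,2}`
(encoded as `Fin 2`, with `0` standing for action `1` and `1` for action `2`). -/
abbrev Act15 (n : ℕ) : Fin n ⊕ Fin 2 → Type
  | Sum.inl _ => Bool
  | Sum.inr _ => Fin 2

/-- Payoff of player `n+1`: `2` at `(1,1)`, `1` at `(1,2)` and `(2,1)`, `x_a` at `(2,2)`
(here `(r,s) = (0,0)` encodes `(1,1)`, etc.). -/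
noncomputable def gadgetA (r s : Fin 2) (x : ℝ) : ℝ :=
  if r = 0 ∧ s = 0 then 2 else if r = 0 ∧ s = 1 then 1
  else if r = 1 ∧ s = 0 then 1 else x

/-- Payoff of player `n+2`: `1` at `(1,1)`, `2` at `(1,2)`, `y_a` at `(2,1)`, `1` at
`(2,2)`. -/
noncomputable def gadgetB (r s : Fin 2) (y : ℝ) : ℝ :=
  if r = 0 ∧ s = 0 then 1 else if r = 0 ∧ s = 1 then 2
  else if r = 1 ∧ s = 0 then y else 1

/-- The `(n+2)`-player game: `u_i(a,r,s) = a_i` for `i ∈ {1,…,n}`, and players `n+1`,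
`n+2` play the `2×2` gadget with parameters `x_a`, `y_a`. -/
noncomputable def game15 {n : ℕ} (x y : (Fin n → Bool) → ℝ) :
    ∀ _ : Fin n ⊕ Fin 2, (∀ q, Act15 n q) → ℝ :=
  fun p σ =>
    match p with
    | Sum.inl i => if σ (Sum.inl i) then 1 else 0
    | Sum.inr j =>
      if j = 0 then
        gadgetA (σ (Sum.inr 0)) (σ (Sum.inr 1)) (x (fun i => σ (Sum.inl i)))
      else
        gadgetB (σ (Sum.inr 0)) (σ (Sum.inr 1)) (y (fun i => σ (Sum.inl i)))

/-!
Players `1, …, n` only ever deviate from `0` to `1`, and for a fixed profile `a` of these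
players, the improvement graph of the `2 × 2` game of players `n+1` and `n+2` contains the arrows
`(1,1) → (1,2)` and `(2,1) → (1,1)`, the arrow `(1,2) → (2,2)` iff `x_a = 2`, and the arrow
`(2,2) → (2,1)` iff `y_a = 2`. So if `x_a = y_a = 2` these four arrows form a better-reply cycle.
Otherwise the improvement graph of each `2 × 2` game is acyclic, and ordering profiles
lexicographically by the actions of the first `n` players and then by a topological order of the
`2 × 2` game gives a generalized ordinal potential, which rules out any better-reply cycle.
-/

open Function

section BetterReply

variable {P : Type*} {C : P → Type*}

def IsBetterReply (u : ∀ _ : P, (∀ q, C q) → ℝ) (σ τ : ∀ q, C q) : Prop :=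
  ∃ p, τ p ≠ σ p ∧ (∀ q, q ≠ p → τ q = σ q) ∧ u p σ < u p τ

theorem isBetterReply_update [DecidableEq P] {u : ∀ _ : P, (∀ q, C q) → ℝ} {σ : ∀ q, C q}
    {p : P} {v : C p} (h : u p σ < u p (update σ p v)) : IsBetterReply u σ (update σ p v) := by
  refine ⟨p, fun hv => ?_, fun q hq => update_of_ne hq _ _, h⟩
  rw [update_self] at hv
  rw [hv, update_eq_self] at h
  exact h.false

theorem not_hasBetterReplyCycle_of_potential {β : Type*} [Preorder β]
    {u : ∀ _ : P, (∀ q, C q) → ℝ} (Φ : (∀ q, C q) → β)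
    (hΦ : ∀ σ τ, IsBetterReply u σ τ → Φ σ < Φ τ) : ¬ HasBetterReplyCycle u := by
  rintro ⟨K, a, hK, hcycle, hstep⟩
  have hmono : ∀ t ≤ K, Φ (a 0) ≤ Φ (a t) := by
    intro t ht
    induction t with
    | zero => exact le_rfl
    | succ t ih => exact (ih (by omega)).trans (hΦ _ _ (hstep t (by omega))).le
  obtain ⟨k, rfl⟩ : ∃ k, K = k + 1 := ⟨K - 1, by omega⟩
  have := (hmono k (by omega)).trans_lt (hΦ _ _ (hstep k (by omega)))
  rw [hcycle] at this
  exact this.false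

end BetterReply

section Gadget

-- A topological order of the improvement graph of the `2 × 2` game, which is acyclic
-- unless `x = y = 2`.
noncomputable def gadgetPotential (x y : ℝ) : Fin 2 → Fin 2 → ℕ :=
  if x = 2 then ![![1, 2], ![0, 3]]
  else if y = 2 then ![![2, 3], ![1, 0]]
  else ![![2, 3], ![0, 1]]

variable {x y : ℝ}

theorem gadgetPotential_lt_of_gadgetA_lt (hx : x = 0 ∨ x = 2) {r r' s : Fin 2}
    (h : gadgetA r s x < gadgetA r' s x) : gadgetPotential x y r s < gadgetPotential x y r' s := by
  revert h
  by_cases hy : y = 2 <;>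
    rcases hx with rfl | rfl <;> fin_cases r <;> fin_cases r' <;> fin_cases s <;>
      norm_num [gadgetA, gadgetPotential, hy]

theorem gadgetPotential_lt_of_gadgetB_lt (hy : y = 0 ∨ y = 2) (hxy : x = 2 → y ≠ 2)
    {r s s' : Fin 2} (h : gadgetB r s y < gadgetB r s' y) :
    gadgetPotential x y r s < gadgetPotential x y r s' := by
  revert h hxy
  by_cases hx : x = 2 <;>
    rcases hy with rfl | rfl <;> fin_cases r <;> fin_cases s <;> fin_cases s' <;>
      norm_num [gadgetB, gadgetPotential, hx]

end Gadget

section Game15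

variable {n : ℕ} {x y : (Fin n → Bool) → ℝ}

def gadgetProfile (b : Fin n → Bool) (r s : Fin 2) : ∀ q, Act15 n q
  | Sum.inl i => b i
  | Sum.inr j => ![r, s] j

theorem update_gadgetProfile_inr_zero (b : Fin n → Bool) (r r' s : Fin 2) :
    update (gadgetProfile b r s) (Sum.inr 0) r' = gadgetProfile b r' s := by
  funext q
  rcases q with i | j
  · rfl
  · fin_cases j <;> rfl

theorem update_gadgetProfile_inr_one (b : Fin n → Bool) (r s s' : Fin 2) :
    update (gadgetProfile b r s) (Sum.inr 1) s' = gadgetProfile b r s' := by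
  funext q
  rcases q with i | j
  · rfl
  · fin_cases j <;> rfl

theorem isBetterReply_gadgetProfile_inr_zero {b : Fin n → Bool} {r r' s : Fin 2}
    (h : gadgetA r s (x b) < gadgetA r' s (x b)) :
    IsBetterReply (game15 x y) (gadgetProfile b r s) (gadgetProfile b r' s) := by
  rw [← update_gadgetProfile_inr_zero b r r' s]
  exact isBetterReply_update (by rwa [update_gadgetProfile_inr_zero])

theorem isBetterReply_gadgetProfile_inr_one {b : Fin n → Bool} {r s s' : Fin 2}
    (h : gadgetB r s (y b) < gadgetB r s' (y b)) :
    IsBetterReply (game15 x y) (gadgetProfile b r s) (gadgetProfile b r s') := by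
  rw [← update_gadgetProfile_inr_one b r s s']
  exact isBetterReply_update (by rwa [update_gadgetProfile_inr_one])

theorem hasBetterReplyCycle_game15 {b : Fin n → Bool} (hx : x b = 2) (hy : y b = 2) :
    HasBetterReplyCycle (game15 x y) := by
  refine ⟨4, fun t => ![gadgetProfile b 0 0, gadgetProfile b 0 1, gadgetProfile b 1 1,
    gadgetProfile b 1 0] (Fin.ofNat 4 t), le_add_left le_rfl, rfl, fun t ht => ?_⟩
  interval_cases t
  · exact isBetterReply_gadgetProfile_inr_one (r := 0) (s := 0) (s' := 1) (by norm_num [gadgetB])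
  · exact isBetterReply_gadgetProfile_inr_zero (r := 0) (r' := 1) (s := 1)
      (by norm_num [gadgetA, hx])
  · exact isBetterReply_gadgetProfile_inr_one (r := 1) (s := 1) (s' := 0)
      (by norm_num [gadgetB, hy])
  · exact isBetterReply_gadgetProfile_inr_zero (r := 1) (r' := 0) (s := 0) (by norm_num [gadgetA])

noncomputable def game15Potential (x y : (Fin n → Bool) → ℝ) (σ : ∀ q, Act15 n q) :
    (Fin n → Bool) ×ₗ ℕ :=
  toLex (fun i => σ (Sum.inl i),
    gadgetPotential (x fun i => σ (Sum.inl i)) (y fun i => σ (Sum.inl i)) (σ (Sum.inr 0))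
      (σ (Sum.inr 1)))

theorem game15Potential_lt_of_isBetterReply (hx : ∀ a, x a = 0 ∨ x a = 2)
    (hy : ∀ a, y a = 0 ∨ y a = 2) (hxy : ∀ a, x a = 2 → y a ≠ 2) {σ τ : ∀ q, Act15 n q}
    (h : IsBetterReply (game15 x y) σ τ) : game15Potential x y σ < game15Potential x y τ := by
  obtain ⟨p, -, hagree, hlt⟩ := h
  rw [game15Potential, game15Potential, Prod.Lex.toLex_lt_toLex]
  rcases p with i | j
  · left
    have hi : σ (Sum.inl i) < τ (Sum.inl i) := by
      revert hlt
      simp only [game15]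
      cases σ (Sum.inl i) <;> cases τ (Sum.inl i) <;> norm_num
    refine Pi.lt_def.2 ⟨fun k => ?_, i, hi⟩
    rcases eq_or_ne k i with rfl | hk
    · exact hi.le
    · exact (hagree _ (Sum.inl_injective.ne hk)).ge
  · right
    have hfirst : (fun i => σ (Sum.inl i)) = fun i => τ (Sum.inl i) :=
      funext fun i => (hagree _ Sum.inl_ne_inr).symm
    refine ⟨hfirst, ?_⟩
    dsimp only
    simp only [game15, ← hfirst] at hlt ⊢
    obtain rfl | rfl : j = 0 ∨ j = 1 := by omega
    · rw [hagree (Sum.inr 1) (by simp)] at hlt ⊢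
      exact gadgetPotential_lt_of_gadgetA_lt (hx _) (by simpa using hlt)
    · rw [hagree (Sum.inr 0) (by simp)] at hlt ⊢
      exact gadgetPotential_lt_of_gadgetB_lt (hy _) (hxy _) (by simpa using hlt)

end Game15

theorem stmt_15_general (n : ℕ) (x y : (Fin n → Bool) → ℝ)
    (hx : ∀ a, x a = 0 ∨ x a = 2) (hy : ∀ a, y a = 0 ∨ y a = 2) :
    HasBetterReplyCycle (game15 x y) ↔ ∃ a : Fin n → Bool, x a = 2 ∧ y a = 2 := by
  refine ⟨fun hcycle => ?_, fun ⟨a, hxa, hya⟩ => hasBetterReplyCycle_game15 hxa hya⟩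
  by_contra! hxy
  exact not_hasBetterReplyCycle_of_potential (game15Potential x y)
    (fun _ _ => game15Potential_lt_of_isBetterReply hx hy hxy) hcycle

theorem stmt_15 (n : ℕ) (hn : 1 ≤ n) (x y : (Fin n → Bool) → ℝ)
    (hx : ∀ a, x a = 0 ∨ x a = 2) (hy : ∀ a, y a = 0 ∨ y a = 2) :
    HasBetterReplyCycle (game15 x y) ↔ ∃ a : Fin n → Bool, x a = 2 ∧ y a = 2 :=
  stmt_15_general n x y hx hy
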